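/- In the extended grammar with chain D→ᵃD₁→ᵃ⋯→ᵃD_k→ᵃ⊥ and E→ᵃE₁→ᵃ⋯→ᵃE_k with E_k→ᵃ⊥ and E_k→ᵇ⊥ (other transitions as before: A→ᵃC, A→ᵃA', B→ᵃC, B→ᵃB', C→ᵃD, C→ᵃE, A'→ᵃA'', B'→ᵃB'', A''→ᵃD, B''→ᵃE), the equivalence level of (A,B) is exactly 3 + k. -/
import Mathlib


inductive St where
  | A | A' | A'' | B | B' | B'' | C | bot
  | D (i : ℕ)
  | E (i : ℕ)
  deriving DecidableEq

inductive Act where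
  | a | b
  deriving DecidableEq

/-- The extended grammar LTS, with chains D = D 0 →ᵃ D 1 →ᵃ ⋯ →ᵃ D k →ᵃ ⊥ and
similarly for E, except E k additionally has a b-transition to ⊥. -/
inductive step (k : ℕ) : St → Act → St → Prop where
  | r1 : step k .A .a .C
  | r2 : step k .A .a .A'
  | r3 : step k .B .a .C
  | r4 : step k .B .a .B'
  | r5 : step k .C .a (.D 0)
  | r6 : step k .C .a (.E 0)
  | r7 : step k .A' .a .A''
  | r8 : step k .B' .a .B''
  | r9 : step k .A'' .a (.D 0)
  | r10 : step k .B'' .a (.E 0)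
  | rD : ∀ i, i < k → step k (.D i) .a (.D (i + 1))
  | rE : ∀ i, i < k → step k (.E i) .a (.E (i + 1))
  | rDk : step k (.D k) .a .bot
  | rEk : step k (.E k) .a .bot
  | rEkb : step k (.E k) .b .bot

def approx (k : ℕ) : ℕ → St → St → Prop
  | 0, _, _ => True
  | m + 1, p, q =>
    (∀ c p', step k p c p' → ∃ q', step k q c q' ∧ approx k m p' q') ∧
    (∀ c q', step k q c q' → ∃ p', step k p c p' ∧ approx k m p' q')

theorem approx_mono {k m : ℕ} {p q : St} (h : approx k (m+1) p q) : approx k m p q := by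
  induction m generalizing p q with
  | zero => trivial
  | succ n ih =>
    obtain ⟨h1, h2⟩ := h
    exact ⟨fun c p' hs => (h1 c p' hs).imp fun q' ⟨hq, ha⟩ => ⟨hq, ih ha⟩,
           fun c q' hs => (h2 c q' hs).imp fun p' ⟨hp, ha⟩ => ⟨hp, ih ha⟩⟩

theorem approx_refl (k m : ℕ) : ∀ p, approx k m p p := by
  induction m with
  | zero => intro p; trivial
  | succ n ih => intro p; exact ⟨fun c p' h => ⟨p', h, ih p'⟩, fun c q' h => ⟨q', h, ih q'⟩⟩

theorem pDE (k : ℕ) : ∀ m i, m + i ≤ k → approx k m (.D i) (.E i) := by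
  intro m
  induction m with
  | zero => intro i _; trivial
  | succ m ih =>
    intro i hi
    constructor
    · intro c p' hs
      cases hs with
      | rD _ h => exact ⟨.E (i+1), .rE i h, ih (i+1) (by omega)⟩
      | rDk => omega
    · intro c q' hs
      cases hs with
      | rE _ h => exact ⟨.D (i+1), .rD i h, ih (i+1) (by omega)⟩
      | rEk => omega
      | rEkb => omega

theorem nDE (k : ℕ) : ∀ j i, i + j = k → ¬ approx k (j+1) (.D i) (.E i) := by
  intro j
  induction j with
  | zero =>
    intro i hi h
    have : i = k := by omega
    subst this
    obtain ⟨p', hp, -⟩ := h.2 .b .bot .rEkb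
    cases hp
  | succ j ih =>
    intro i hi h
    obtain ⟨q', hq, ha⟩ := h.1 .a (.D (i+1)) (.rD i (by omega))
    cases hq with
    | rE _ _ => exact ih (i+1) (by omega) ha
    | rEk => omega

theorem nDE1 (k : ℕ) : ∀ j i, i + j + 1 = k → ¬ approx k (j+1) (.D i) (.E (i+1)) := by
  intro j
  induction j with
  | zero =>
    intro i hi h
    have e : i + 1 = k := by omega
    obtain ⟨p', hp, -⟩ := h.2 .b .bot (e ▸ step.rEkb)
    cases hp
  | succ j ih =>
    intro i hi h
    obtain ⟨q', hq, ha⟩ := h.1 .a (.D (i+1)) (.rD i (by omega))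
    cases hq with
    | rE _ _ => exact ih (i+1) (by omega) ha
    | rEk => omega

theorem nDD (k : ℕ) : ∀ j i, i + j + 1 = k → ¬ approx k (j+2) (.D i) (.D (i+1)) := by
  intro j
  induction j with
  | zero =>
    intro i hi h
    have e : i + 1 = k := by omega
    subst e
    obtain ⟨q', hq, ha⟩ := h.1 .a (.D (i+1)) (.rD i (by omega))
    cases hq with
    | rD _ hlt => omega
    | rDk =>
      obtain ⟨q2, hq2, -⟩ := ha.1 .a .bot .rDk
      cases hq2
  | succ j ih =>
    intro i hi h
    obtain ⟨q', hq, ha⟩ := h.1 .a (.D (i+1)) (.rD i (by omega))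
    cases hq with
    | rD _ _ => exact ih (i+1) (by omega) ha
    | rDk => omega

theorem pA''B'' (k : ℕ) : approx k (k+1) .A'' .B'' := by
  constructor
  · intro c p' hs
    cases hs
    exact ⟨.E 0, .r10, pDE k k 0 (by omega)⟩
  · intro c q' hs
    cases hs
    exact ⟨.D 0, .r9, pDE k k 0 (by omega)⟩

theorem pA'B' (k : ℕ) : approx k (k+2) .A' .B' := by
  constructor
  · intro c p' hs; cases hs; exact ⟨.B'', .r8, pA''B'' k⟩
  · intro c q' hs; cases hs; exact ⟨.A'', .r7, pA''B'' k⟩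

theorem pAB (k : ℕ) : approx k (k+3) .A .B := by
  constructor
  · intro c p' hs
    cases hs with
    | r1 => exact ⟨.C, .r3, approx_refl k (k+2) .C⟩
    | r2 => exact ⟨.B', .r4, pA'B' k⟩
  · intro c q' hs
    cases hs with
    | r3 => exact ⟨.C, .r1, approx_refl k (k+2) .C⟩
    | r4 => exact ⟨.A', .r2, pA'B' k⟩

theorem nAB (k : ℕ) : ¬ approx k (k+4) .A .B := by
  intro h
  obtain ⟨q1, hq1, h3⟩ := h.1 .a .A' .r2
  cases hq1 with
  | r4 =>
    -- matched by B'
    obtain ⟨q2, hq2, h2⟩ := h3.1 .a .A'' .r7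
    cases hq2
    obtain ⟨q3, hq3, h1⟩ := h2.1 .a (.D 0) .r9
    cases hq3
    exact nDE k k 0 (by omega) h1
  | r3 =>
    -- matched by C
    obtain ⟨q2, hq2, h2⟩ := h3.1 .a .A'' .r7
    cases hq2 with
    | r5 =>
      -- A'' vs D 0
      obtain ⟨q3, hq3, h1⟩ := h2.1 .a (.D 0) .r9
      cases hq3 with
      | rD _ hlt =>
        have e : k - 1 + 2 = k + 1 := by omega
        exact nDD k (k-1) 0 (by omega) (by rw [e]; exact h1)
      | rDk =>
        -- here k = 0
        obtain ⟨q4, hq4, -⟩ := h1.1 .a .bot .rDk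
        cases hq4
    | r6 =>
      -- A'' vs E 0
      obtain ⟨q3, hq3, h1⟩ := h2.1 .a (.D 0) .r9
      cases hq3 with
      | rE _ hlt =>
        have e : k - 1 + 1 = k := by omega
        exact nDE1 k (k-1) 0 (by omega) (by rw [e]; exact approx_mono h1)
      | rEk =>
        -- here k = 0
        obtain ⟨q4, hq4, -⟩ := h1.1 .a .bot .rDk
        cases hq4

theorem eqLv_extended : ∀ k : ℕ,
    approx k (3 + k) .A .B ∧ ¬ approx k (3 + k + 1) .A .B := by
  intro k
  constructor
  · rw [show 3 + k = k + 3 by omega]; exact pAB k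
  · rw [show 3 + k + 1 = k + 4 by omega]; exact nAB k
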